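/- Let k,l ≥ 1 with kl ≥ 4, let u = (√(kl) + √(kl−4))/2, and define s^{(k,l)}_{2n+1} = u^{−2n} and s^{(k,l)}_{2n} = √(l/k)·u^{−2n+1}. Then for every integer n, a^{(k,l)}_n − s^{(k,l)}_0·a^{(l,k)}_{n−1} = s^{(k,l)}_n. Consequently, the sequence (a^{(k,l)}_{n+1}/a^{(l,k)}_n)_{n≥1} is strictly decreasing and converges to s^{(k,l)}_0 = √(l/k)·u. -/

import Mathlib

/-!
Both `n ↦ a n` and `n ↦ s 0 * a' (n - 1) + s n` satisfy the (k,l)-recurrence (for `s` this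
is `u + u⁻¹ = √(kl) = k √(l/k)`), and they agree at `n = 0, 1`, so they coincide. As `s > 0`,
this identity and its analogue for `a'` give `a' (n + 2) > u² a' n` once `a' n ≥ 0`, so the
integers `a' (n + 1)` are positive and tend to infinity. Then
`a (n + 2) / a' (n + 1) - s 0 = s (n + 2) / a' (n + 1) → 0`, and the ratios decrease because
the Casoratian `a (m + 1) a' (m + 1) - a (m + 2) a' m` is constantly `1`.
-/

open Filter Topology

section Recurrence

def klCoeff {α : Type*} (k l : α) (n : ℤ) : α := if Even n then l else k

@[simp] lemma klCoeff_add_one {α : Type*} (k l : α) (n : ℤ) :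
    klCoeff l k (n + 1) = klCoeff k l n := by
  by_cases h : Even n <;> simp [klCoeff, h]

@[simp] lemma klCoeff_sub_one {α : Type*} (k l : α) (n : ℤ) :
    klCoeff l k (n - 1) = klCoeff k l n := by
  by_cases h : Even n <;> simp [klCoeff, h]

variable {R : Type*} [CommRing R]

def KLRecurrence (k l : R) (a : ℤ → R) : Prop :=
  ∀ n, a (n + 2) = klCoeff k l n * a (n + 1) - a n

variable {k l : R} {a a' b : ℤ → R}

lemma map_klCoeff {S : Type*} [CommRing S] (f : R →+* S) (n : ℤ) :
    f (klCoeff k l n) = klCoeff (f k) (f l) n := by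
  unfold klCoeff; split_ifs <;> rfl

lemma KLRecurrence.of_even_odd
    (heven : ∀ n : ℤ, a (2 * n) = l * a (2 * n - 1) - a (2 * n - 2))
    (hodd : ∀ n : ℤ, a (2 * n + 1) = k * a (2 * n) - a (2 * n - 1)) :
    KLRecurrence k l a := by
  intro n
  obtain ⟨m, rfl | rfl⟩ := Int.even_or_odd' n
  · simpa [klCoeff, mul_add, add_sub_assoc] using heven (m + 1)
  · rw [klCoeff, if_neg (Int.not_even_two_mul_add_one m),
      show 2 * m + 1 + 2 = 2 * (m + 1) + 1 by ring, show 2 * m + 1 + 1 = 2 * (m + 1) by ring,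
      show 2 * m + 1 = 2 * (m + 1) - 1 by ring]
    exact hodd (m + 1)

lemma KLRecurrence.map {S : Type*} [CommRing S] (ha : KLRecurrence k l a) (f : R →+* S) :
    KLRecurrence (f k) (f l) (fun n => f (a n)) := fun n => by
  simp only [ha n, map_sub, map_mul, map_klCoeff]

lemma KLRecurrence.add (ha : KLRecurrence k l a) (hb : KLRecurrence k l b) :
    KLRecurrence k l (a + b) := fun n => by
  simp only [Pi.add_apply, ha n, hb n]; ring

lemma KLRecurrence.const_mul (ha : KLRecurrence k l a) (c : R) :
    KLRecurrence k l (fun n => c * a n) := fun n => by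
  simp only [ha n]; ring

lemma KLRecurrence.comp_sub_one (ha : KLRecurrence l k a) :
    KLRecurrence k l (fun n => a (n - 1)) := fun n => by
  simpa [sub_add_eq_add_sub, add_sub_assoc] using ha (n - 1)

lemma KLRecurrence.ext (ha : KLRecurrence k l a) (hb : KLRecurrence k l b)
    (h0 : a 0 = b 0) (h1 : a 1 = b 1) : a = b := by
  suffices ∀ n, a n = b n ∧ a (n + 1) = b (n + 1) from funext fun n => (this n).1
  intro n
  induction n using Int.induction_on with
  | zero => exact ⟨h0, h1⟩
  | succ n ih => exact ⟨ih.2, by rw [add_assoc, one_add_one_eq_two, ha, hb, ih.1, ih.2]⟩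
  | pred n ih =>
    refine ⟨?_, by simpa using ih.1⟩
    have ha' := ha (-n - 1)
    have hb' := hb (-n - 1)
    rw [show -(n : ℤ) - 1 + 2 = -n + 1 by ring, show -(n : ℤ) - 1 + 1 = -n by ring] at ha' hb'
    linear_combination ha' - hb' - ih.2 + klCoeff k l (-n - 1) * ih.1

lemma KLRecurrence.casoratian_add_one (ha : KLRecurrence k l a) (ha' : KLRecurrence l k a')
    (m : ℤ) : a (m + 2) * a' (m + 2) - a (m + 3) * a' (m + 1) =
      a (m + 1) * a' (m + 1) - a (m + 2) * a' m := by
  have h := ha (m + 1)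
  rw [show m + 1 + 2 = m + 3 by ring, show m + 1 + 1 = m + 2 by ring] at h
  rw [h, ha' m, klCoeff_add_one]
  ring

lemma KLRecurrence.casoratian (ha : KLRecurrence k l a) (ha' : KLRecurrence l k a') (m : ℤ) :
    a (m + 1) * a' (m + 1) - a (m + 2) * a' m = a 1 * a' 1 - a 2 * a' 0 := by
  induction m using Int.induction_on with
  | zero => simp
  | succ m ih =>
    rw [← ih, ← ha.casoratian_add_one ha' m]
    ring_nf
  | pred m ih =>
    rw [← ih, ← ha.casoratian_add_one ha' (-m - 1)]
    ring_nf

structure IsKLSeq (k l : R) (a : ℤ → R) : Prop where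
  zero : a 0 = 0
  one : a 1 = 1
  recurrence : KLRecurrence k l a

namespace IsKLSeq

lemma of_even_odd (h0 : a 0 = 0) (h1 : a 1 = 1)
    (heven : ∀ n : ℤ, a (2 * n) = l * a (2 * n - 1) - a (2 * n - 2))
    (hodd : ∀ n : ℤ, a (2 * n + 1) = k * a (2 * n) - a (2 * n - 1)) : IsKLSeq k l a :=
  ⟨h0, h1, .of_even_odd heven hodd⟩

lemma map {S : Type*} [CommRing S] (ha : IsKLSeq k l a) (f : R →+* S) :
    IsKLSeq (f k) (f l) (fun n => f (a n)) :=
  ⟨by simp [ha.zero], by simp [ha.one], ha.recurrence.map f⟩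

lemma intCast {k l : ℤ} {a : ℤ → ℤ} (ha : IsKLSeq k l a) :
    IsKLSeq (k : R) (l : R) (fun n => (a n : R)) := by
  simpa using ha.map (Int.castRingHom R)

lemma two (ha : IsKLSeq k l a) : a 2 = l := by
  simpa [ha.zero, ha.one, klCoeff] using ha.recurrence 0

lemma neg_one (ha : IsKLSeq k l a) : a (-1) = -1 := by
  have h := ha.recurrence (-1)
  simp only [show (-1 : ℤ) + 2 = 1 by norm_num, neg_add_cancel, ha.zero, ha.one, mul_zero] at h
  linear_combination h

lemma casoratian_eq_one (ha : IsKLSeq k l a) (ha' : IsKLSeq l k a') (m : ℤ) :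
    a (m + 1) * a' (m + 1) - a (m + 2) * a' m = 1 := by
  rw [ha.recurrence.casoratian ha'.recurrence, ha.one, ha'.one, ha'.zero]
  ring

end IsKLSeq

end Recurrence

section Field

variable {K : Type*} [Field K] {k l r u : K}

-- For `r = √(l/k)` and `u` as in the paper, this is the sequence `s^{(k,l)}`.
lemma klRecurrence_klCoeff_mul_zpow (hu : u ≠ 0) (hl : r * (u + u⁻¹) = l)
    (hk : k * r = u + u⁻¹) : KLRecurrence k l (fun n => klCoeff 1 r n * u ^ (1 - n)) := by
  intro n
  have e0 : u ^ (1 - n) = u * u ^ (-n) := by rw [sub_eq_add_neg, zpow_add₀ hu, zpow_one]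
  have e1 : u ^ (1 - (n + 1)) = u ^ (-n) := by ring_nf
  have e2 : u ^ (1 - (n + 1 + 1)) = u⁻¹ * u ^ (-n) := by
    rw [show 1 - (n + 1 + 1) = -1 + -n by ring, zpow_add₀ hu, zpow_neg_one]
  simp only [show n + 2 = n + 1 + 1 by ring, e0, e1, e2, klCoeff_add_one]
  unfold klCoeff
  split_ifs
  · linear_combination u ^ (-n) * hl
  · linear_combination -u ^ (-n) * hk

lemma IsKLSeq.sub_mul_shift_eq {a a' : ℤ → K} (ha : IsKLSeq k l a) (ha' : IsKLSeq l k a')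
    (hu : u ≠ 0) (hl : r * (u + u⁻¹) = l) (hk : k * r = u + u⁻¹) (n : ℤ) :
    a n - r * u * a' (n - 1) = klCoeff 1 r n * u ^ (1 - n) := by
  have h := ha.recurrence.ext ((ha'.recurrence.comp_sub_one.const_mul (r * u)).add
    (klRecurrence_klCoeff_mul_zpow hu hl hk)) (by simp [ha.zero, ha'.neg_one, klCoeff])
    (by simp [ha.one, ha'.zero, klCoeff])
  rw [h]
  simp

lemma eq_klCoeff_mul_zpow_of_even_odd {s : ℤ → K}
    (hodd : ∀ n : ℤ, s (2 * n + 1) = u ^ (-(2 * n)))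
    (heven : ∀ n : ℤ, s (2 * n) = r * u ^ (-(2 * n) + 1)) (n : ℤ) :
    s n = klCoeff 1 r n * u ^ (1 - n) := by
  obtain ⟨m, rfl | rfl⟩ := Int.even_or_odd' n
  · rw [heven, klCoeff, if_pos (even_two_mul m), neg_add_eq_sub]
  · rw [hodd, klCoeff, if_neg (Int.not_even_two_mul_add_one m), one_mul]
    ring_nf

end Field

section Ordered

variable {K : Type*} [Field K] [LinearOrder K] [IsStrictOrderedRing K] {k l r u : K}

lemma IsKLSeq.strictAnti_div {a a' : ℤ → K} (ha : IsKLSeq k l a) (ha' : IsKLSeq l k a')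
    (hpos : ∀ n : ℕ, 0 < a' (n + 1)) : StrictAnti fun n : ℕ => a (n + 2) / a' (n + 1) := by
  refine strictAnti_nat_of_succ_lt fun n => ?_
  have hpos' := hpos (n + 1)
  have hW := ha.casoratian_eq_one ha' (n + 1)
  push_cast at hpos' ⊢
  rw [div_lt_div_iff₀ hpos' (hpos n)]
  ring_nf at hW hpos' ⊢
  linarith

lemma klCoeff_mul_zpow_pos (hr : 0 < r) (hu : 0 < u) (n : ℤ) :
    0 < klCoeff 1 r n * u ^ (1 - n) := by
  unfold klCoeff; split_ifs <;> positivity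

lemma abs_klCoeff_mul_zpow_le (hr : 0 < r) (hu : 1 ≤ u) {n : ℤ} (hn : 1 ≤ n) :
    |klCoeff 1 r n * u ^ (1 - n)| ≤ max 1 r := by
  have hc : 0 ≤ klCoeff 1 r n := by unfold klCoeff; split_ifs <;> positivity
  rw [abs_of_pos (klCoeff_mul_zpow_pos hr (by linarith) n)]
  calc klCoeff 1 r n * u ^ (1 - n) ≤ klCoeff 1 r n :=
        mul_le_of_le_one_right hc (zpow_le_one_of_nonpos₀ hu (by omega))
    _ ≤ max 1 r := by unfold klCoeff; split_ifs <;> simp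

lemma lt_add_two_of_sub_mul_pos {a a' : ℤ → K} (hr : 0 < r) (hu : 1 ≤ u)
    (ha : ∀ n, 0 < a n - r * u * a' (n - 1)) (ha' : ∀ n, 0 < a' n - r⁻¹ * u * a (n - 1))
    {n : ℤ} (hn : 0 ≤ a' n) : a' n < a' (n + 2) := by
  have h1 := ha (n + 1)
  have h2 := ha' (n + 2)
  rw [add_sub_cancel_right] at h1
  rw [show n + 2 - 1 = n + 1 by ring] at h2
  calc a' n ≤ u ^ 2 * a' n := le_mul_of_one_le_left hn (one_le_pow₀ hu)
    _ = r⁻¹ * u * (r * u * a' n) := by field_simp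
    _ < r⁻¹ * u * a (n + 1) := by gcongr; linarith
    _ < a' (n + 2) := by linarith

-- The `(l,k)`-sequence satisfies the identity with `r = √(l/k)` replaced by `r⁻¹ = √(k/l)`.
lemma IsKLSeq.lt_add_two {a a' : ℤ → K} (ha : IsKLSeq k l a) (ha' : IsKLSeq l k a')
    (hr : 0 < r) (hu : 1 ≤ u) (hl : r * (u + u⁻¹) = l) (hk : k * r = u + u⁻¹) {n : ℤ}
    (hn : 0 ≤ a' n) : a' n < a' (n + 2) := by
  have hu0 : 0 < u := by linarith
  refine lt_add_two_of_sub_mul_pos (a := a) hr hu (fun n => ?_) (fun n => ?_) hn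
  · rw [ha.sub_mul_shift_eq ha' hu0.ne' hl hk]
    exact klCoeff_mul_zpow_pos hr hu0 n
  · rw [ha'.sub_mul_shift_eq ha hu0.ne' (by rw [← hk]; field_simp) (by rw [← hl]; field_simp)]
    exact klCoeff_mul_zpow_pos (inv_pos.2 hr) hu0 n

end Ordered

lemma add_one_le_two_mul_of_lt_add_two {f : ℤ → ℤ} (h1 : 1 ≤ f 1) (h2 : 1 ≤ f 2)
    (h : ∀ n, 0 ≤ f n → f n < f (n + 2)) (n : ℕ) : (n : ℤ) + 1 ≤ 2 * f (n + 1) := by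
  induction n using Nat.twoStepInduction with
  | zero => norm_num; omega
  | one => norm_num; omega
  | more n ih _ =>
    have := h (n + 1) (by omega)
    push_cast
    rw [show (n : ℤ) + 2 + 1 = n + 1 + 2 by ring]
    omega

-- Integrality is what makes the sequence unbounded when `u = 1`, i.e. `kl = 4`.
lemma tendsto_atTop_of_lt_add_two {f : ℤ → ℤ} (h1 : 1 ≤ f 1) (h2 : 1 ≤ f 2)
    (h : ∀ n, 0 ≤ f n → f n < f (n + 2)) :
    Tendsto (fun n : ℕ => (f (n + 1) : ℝ)) atTop atTop := by
  refine tendsto_atTop_mono (fun n => ?_) (tendsto_natCast_atTop_atTop.atTop_div_const two_pos)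
  have : ((n + 1 : ℤ) : ℝ) ≤ ((2 * f (n + 1) : ℤ) : ℝ) :=
    Int.cast_le.2 (add_one_le_two_mul_of_lt_add_two h1 h2 h n)
  push_cast at this
  linarith

lemma tendsto_div_of_abs_sub_mul_le {p q : ℕ → ℝ} {L C : ℝ} (hq : Tendsto q atTop atTop)
    (h : ∀ n, |p n - L * q n| ≤ C) : Tendsto (fun n => p n / q n) atTop (𝓝 L) := by
  have hq0 : ∀ᶠ n in atTop, 0 < q n := hq.eventually_gt_atTop 0
  have hlim : Tendsto (fun n => (p n - L * q n) / q n) atTop (𝓝 0) := by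
    refine squeeze_zero_norm' ?_ (by simpa using hq.inv_tendsto_atTop.const_mul C)
    filter_upwards [hq0] with n hn
    rw [norm_div, Real.norm_of_nonneg hn.le, div_eq_mul_inv, Real.norm_eq_abs]
    exact mul_le_mul_of_nonneg_right (h n) (inv_nonneg.2 hn.le)
  refine (by simpa using hlim.const_add L : Tendsto _ _ _).congr' ?_
  filter_upwards [hq0] with n hn
  field_simp
  ring

-- The larger root of `t² - √x t + 1`; the paper's `u` is `klRoot (k * l)`.
noncomputable def klRoot (x : ℝ) : ℝ := (√x + √(x - 4)) / 2

lemma one_le_klRoot {x : ℝ} (hx : 4 ≤ x) : 1 ≤ klRoot x := by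
  have h2 : 2 ≤ √x := by
    rw [show (2 : ℝ) = √4 by rw [show (4 : ℝ) = 2 ^ 2 by norm_num, Real.sqrt_sq two_pos.le]]
    exact Real.sqrt_le_sqrt hx
  have := Real.sqrt_nonneg (x - 4)
  unfold klRoot
  linarith

lemma klRoot_add_inv {x : ℝ} (hx : 4 ≤ x) : klRoot x + (klRoot x)⁻¹ = √x := by
  have hinv : (klRoot x)⁻¹ = (√x - √(x - 4)) / 2 := by
    refine inv_eq_of_mul_eq_one_right ?_
    rw [klRoot, div_mul_div_comm]
    linear_combination
      (Real.sq_sqrt (by linarith : 0 ≤ x) - Real.sq_sqrt (by linarith : 0 ≤ x - 4)) / 4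
  rw [hinv, klRoot]
  ring

lemma mul_sqrt_div_eq_klRoot_add_inv {k l : ℝ} (hk : 0 < k) (hx : 4 ≤ k * l) :
    k * √(l / k) = klRoot (k * l) + (klRoot (k * l))⁻¹ := by
  rw [klRoot_add_inv hx, ← Real.sqrt_sq hk.le, ← Real.sqrt_mul (sq_nonneg k),
    Real.sqrt_sq hk.le]
  congr 1
  field_simp

lemma sqrt_div_mul_klRoot_add_inv {k l : ℝ} (hk : 0 < k) (hx : 4 ≤ k * l) :
    √(l / k) * (klRoot (k * l) + (klRoot (k * l))⁻¹) = l := by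
  have hl : 0 ≤ l := by nlinarith
  rw [← mul_sqrt_div_eq_klRoot_add_inv hk hx, mul_left_comm, ← sq,
    Real.sq_sqrt (div_nonneg hl hk.le)]
  field_simp

/-- the ratio identity `a_n - s₀ a'_{n-1} = s_n` and the limit of
consecutive ratios of the (k,l)-sequence. -/
theorem kl_seq_ratio
    (k l : ℤ) (hk : 1 ≤ k) (hl : 1 ≤ l) (hkl : 4 ≤ k * l)
    (a a' : ℤ → ℤ)
    (ha0 : a 0 = 0) (ha1 : a 1 = 1)
    (haeven : ∀ n : ℤ, a (2 * n) = l * a (2 * n - 1) - a (2 * n - 2))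
    (haodd : ∀ n : ℤ, a (2 * n + 1) = k * a (2 * n) - a (2 * n - 1))
    (ha'0 : a' 0 = 0) (ha'1 : a' 1 = 1)
    (ha'even : ∀ n : ℤ, a' (2 * n) = k * a' (2 * n - 1) - a' (2 * n - 2))
    (ha'odd : ∀ n : ℤ, a' (2 * n + 1) = l * a' (2 * n) - a' (2 * n - 1))
    (u : ℝ)
    (hu : u = (Real.sqrt ((k : ℝ) * l) + Real.sqrt ((k : ℝ) * l - 4)) / 2)
    (s : ℤ → ℝ)
    (hsodd : ∀ n : ℤ, s (2 * n + 1) = u ^ (-(2 * n)))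
    (hseven : ∀ n : ℤ, s (2 * n) = Real.sqrt ((l : ℝ) / k) * u ^ (-(2 * n) + 1)) :
    (∀ n : ℤ, (a n : ℝ) - s 0 * (a' (n - 1) : ℝ) = s n) ∧
    StrictAnti (fun n : ℕ => (a ((n : ℤ) + 2) : ℝ) / (a' ((n : ℤ) + 1) : ℝ)) ∧
    Filter.Tendsto (fun n : ℕ => (a ((n : ℤ) + 2) : ℝ) / (a' ((n : ℤ) + 1) : ℝ))
      Filter.atTop (nhds (s 0)) ∧
    s 0 = Real.sqrt ((l : ℝ) / k) * u := by
  have hk0 : (0 : ℝ) < k := Int.cast_pos.2 (by omega)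
  have hx : (4 : ℝ) ≤ k * l := by exact_mod_cast hkl
  set r := √((l : ℝ) / k)
  have hr0 : 0 < r := Real.sqrt_pos.2 (div_pos (Int.cast_pos.2 (by omega)) hk0)
  have hu1 : 1 ≤ u := hu ▸ one_le_klRoot hx
  have hkr : (k : ℝ) * r = u + u⁻¹ := hu ▸ mul_sqrt_div_eq_klRoot_add_inv hk0 hx
  have hrl : r * (u + u⁻¹) = l := hu ▸ sqrt_div_mul_klRoot_add_inv hk0 hx
  have hA := (IsKLSeq.of_even_odd ha0 ha1 haeven haodd).intCast (R := ℝ)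
  have hA' := (IsKLSeq.of_even_odd ha'0 ha'1 ha'even ha'odd).intCast (R := ℝ)
  have hs := eq_klCoeff_mul_zpow_of_even_odd hsodd hseven
  have hs0 : s 0 = r * u := by simp [hs, klCoeff]
  have hpart1 n : (a n : ℝ) - s 0 * a' (n - 1) = s n := by
    rw [hs0, hs, hA.sub_mul_shift_eq hA' (zero_lt_one.trans_le hu1).ne' hrl hkr]
  have hgrow n (hn : 0 ≤ a' n) : a' n < a' (n + 2) := by
    exact_mod_cast hA.lt_add_two hA' hr0 hu1 hrl hkr (n := n) (by exact_mod_cast hn)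
  have ha'2 : 1 ≤ a' 2 := by have := hA'.two; norm_cast at this; omega
  refine ⟨hpart1, hA.strictAnti_div hA' fun n => ?_, ?_, hs0⟩
  · have := add_one_le_two_mul_of_lt_add_two (by omega) ha'2 hgrow n
    exact_mod_cast (by omega : 0 < a' (n + 1))
  · refine tendsto_div_of_abs_sub_mul_le (tendsto_atTop_of_lt_add_two (by omega) ha'2 hgrow)
      (C := max 1 r) fun n => ?_
    rw [show (a (n + 2) : ℝ) = s 0 * a' (n + 2 - 1) + s (n + 2) by linarith [hpart1 (n + 2)],
      show (n : ℤ) + 2 - 1 = n + 1 by ring, add_sub_cancel_left, hs]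
    exact abs_klCoeff_mul_zpow_le hr0 hu1 (by omega)
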